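/- arXiv:2401.09435 — 2 statements merged into one kernel-verified Lean document; each statement's English description precedes it below -/
import Mathlib

section
/- Let ρ : 2^Ω → 2^Θ be a refining with induced partition Π₁,…,Π_{|Ω|} of Θ, let Bel₀ be a prior belief function on Ω, and Belᵢ conditional belief functions on the Πᵢ. Define Bel = Bel₀^{↑Θ} ⊕ (⊕ᵢ →Belᵢ), the Dempster combination of the vacuous extension of Bel₀ with the Dempster combination of the conditional embeddings of the Belᵢ. Then Bel satisfies: (P1) the marginal of Bel on Ω equals Bel₀, and (P2) Bel ⊕ Bel_{Πᵢ} = Belᵢ for every i (total belief theorem, existence). -/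
open Finset

variable {Ω Θ : Type} [Fintype Ω] [DecidableEq Ω] [Fintype Θ] [DecidableEq Θ]

/-- Vacuous extension to `Θ` of a mass function on the coarsening `Ω`,
via the refining with partition map `P` (`ρ(S) = ⋃_{ω ∈ S} P ω`). -/
def vacExt (P : Ω → Finset Θ) (m₀ : Finset Ω → ℝ) (E : Finset Θ) : ℝ :=
  ∑ S ∈ (Finset.univ : Finset (Finset Ω)).filter (fun S => S.biUnion P = E), m₀ S

/-- Mass of the Dempster combination `→Bel` of the conditional embeddings of the
conditional mass functions `mc ω` (each supported on `P ω`) into `Θ`: the embedding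
of a focal element `e` of `mc ω` is `e ∪ (P ω)ᶜ`, and the focal elements of the
combination are the intersections of one embedded focal element per `ω`
(no normalisation is needed). -/
def embComb (P : Ω → Finset Θ) (mc : Ω → Finset Θ → ℝ) (E : Finset Θ) : ℝ :=
  ∑ e ∈ (Finset.univ : Finset (Ω → Finset Θ)).filter
      (fun e => (Finset.univ.inf fun ω => e ω ∪ (P ω)ᶜ) = E), ∏ ω, mc ω (e ω)

/-- Two-ary Dempster combination (with normalisation) of mass functions on `Θ`. -/
noncomputable def dempster (m₁ m₂ : Finset Θ → ℝ) (E : Finset Θ) : ℝ :=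
  if E = ∅ then 0 else
    (∑ p ∈ (Finset.univ : Finset (Finset Θ × Finset Θ)).filter
        (fun p => p.1 ∩ p.2 = E), m₁ p.1 * m₂ p.2) /
    (1 - ∑ p ∈ (Finset.univ : Finset (Finset Θ × Finset Θ)).filter
        (fun p => p.1 ∩ p.2 = (∅ : Finset Θ)), m₁ p.1 * m₂ p.2)

/-- The categorical mass function on `Θ` assigning all mass to `B`. -/
def catMass (B A : Finset Θ) : ℝ := if A = B then 1 else 0

/-- Outer reduction `ρ̄(E) = {ω : P ω ∩ E ≠ ∅}` of the refining. -/
def outerRed (P : Ω → Finset Θ) (E : Finset Θ) : Finset Ω :=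
  Finset.univ.filter fun ω => (P ω ∩ E).Nonempty

/-! ### Auxiliary material for the proof -/

section AuxGen

variable {α β γ : Type} [Fintype α] [Fintype β] [Fintype γ] [DecidableEq γ]

/-- The Dempster-numerator of two fiber-sum mass functions is a fiber sum over pairs. -/
lemma comb_sum_aux (f : α → γ) (g : β → γ) (a : α → ℝ) (b : β → ℝ)
    (C : γ × γ → Prop) [DecidablePred C] :
    ∑ p ∈ (univ : Finset (γ × γ)).filter C,
        (∑ x ∈ univ.filter (fun x => f x = p.1), a x) *
        (∑ y ∈ univ.filter (fun y => g y = p.2), b y)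
      = ∑ q ∈ (univ : Finset (α × β)).filter (fun q => C (f q.1, g q.2)),
          a q.1 * b q.2 := by
  have hcollapse : ∀ (x : α) (y : β),
      (∑ p ∈ (univ : Finset (γ × γ)).filter C,
        (if f x = p.1 then a x else 0) * (if g y = p.2 then b y else 0))
      = if C (f x, g y) then a x * b y else 0 := by
    intro x y
    rw [Finset.sum_filter]
    have hpt : ∀ p : γ × γ,
        (if C p then (if f x = p.1 then a x else 0) * (if g y = p.2 then b y else 0) else 0)
        = if p = (f x, g y) then (if C (f x, g y) then a x * b y else 0) else 0 := by
      intro p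
      by_cases hp : p = (f x, g y)
      · subst hp; simp
      · rw [if_neg hp]
        by_cases h1 : f x = p.1 <;> by_cases h2 : g y = p.2 <;>
          simp_all [Prod.ext_iff]
    rw [Finset.sum_congr rfl fun p _ => hpt p]
    rw [Finset.sum_ite_eq' univ (f x, g y)]
    simp
  calc
    ∑ p ∈ (univ : Finset (γ × γ)).filter C,
        (∑ x ∈ univ.filter (fun x => f x = p.1), a x) *
        (∑ y ∈ univ.filter (fun y => g y = p.2), b y)
      = ∑ p ∈ (univ : Finset (γ × γ)).filter C, ∑ x : α, ∑ y : β,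
          (if f x = p.1 then a x else 0) * (if g y = p.2 then b y else 0) := by
        refine Finset.sum_congr rfl fun p _ => ?_
        rw [Finset.sum_filter, Finset.sum_filter, Finset.sum_mul_sum]
    _ = ∑ x : α, ∑ y : β, ∑ p ∈ (univ : Finset (γ × γ)).filter C,
          (if f x = p.1 then a x else 0) * (if g y = p.2 then b y else 0) := by
        rw [Finset.sum_comm]
        exact Finset.sum_congr rfl fun x _ => Finset.sum_comm
    _ = ∑ x : α, ∑ y : β, (if C (f x, g y) then a x * b y else 0) :=
        Finset.sum_congr rfl fun x _ => Finset.sum_congr rfl fun y _ => hcollapse x y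
    _ = ∑ q ∈ (univ : Finset (α × β)).filter (fun q => C (f q.1, g q.2)),
          a q.1 * b q.2 := by
        rw [Finset.sum_filter, Fintype.sum_prod_type]

/-- A sum over a function space of a product factors as a product of sums. -/
lemma sum_prod_fun {ι κ : Type} [Fintype ι] [DecidableEq ι] [Fintype κ] (g : ι → κ → ℝ) :
    ∑ e : ι → κ, ∏ i, g i (e i) = ∏ i, ∑ x, g i x := by
  rw [Fintype.prod_sum]

end AuxGen

section Part

variable [Nonempty Ω] {P : Ω → Finset Θ}

lemma class_unique (hPdisj : ∀ ω ω', ω ≠ ω' → P ω ∩ P ω' = ∅) {θ : Θ} {ω ω' : Ω}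
    (h : θ ∈ P ω) (h' : θ ∈ P ω') : ω = ω' := by
  by_contra hne
  have : θ ∈ P ω ∩ P ω' := Finset.mem_inter.2 ⟨h, h'⟩
  rw [hPdisj ω ω' hne] at this
  exact absurd this (Finset.notMem_empty θ)

lemma mem_inf_union (e : Ω → Finset Θ) (θ : Θ) :
    θ ∈ (Finset.univ.inf fun ω => e ω ∪ (P ω)ᶜ) ↔ ∀ ω, θ ∈ e ω ∨ θ ∉ P ω := by
  rw [← Finset.inf'_eq_inf Finset.univ_nonempty]
  simp [Finset.mem_inf']

/-- Key simplification: the focal element of the combination. -/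
lemma key_eq (hPdisj : ∀ ω ω', ω ≠ ω' → P ω ∩ P ω' = ∅) (S : Finset Ω) (e : Ω → Finset Θ)
    (hsub : ∀ ω, e ω ⊆ P ω) :
    (S.biUnion P) ∩ (Finset.univ.inf fun ω => e ω ∪ (P ω)ᶜ) = S.biUnion e := by
  ext θ
  rw [Finset.mem_inter, Finset.mem_biUnion, Finset.mem_biUnion, mem_inf_union]
  constructor
  · rintro ⟨⟨ω, hωS, hθP⟩, h2⟩
    rcases h2 ω with h | h
    · exact ⟨ω, hωS, h⟩
    · exact absurd hθP h
  · rintro ⟨ω, hωS, hθe⟩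
    have hθP := hsub ω hθe
    refine ⟨⟨ω, hωS, hθP⟩, fun ω' => ?_⟩
    by_cases hω : ω' = ω
    · subst hω; exact Or.inl hθe
    · exact Or.inr fun hc => hω (class_unique hPdisj hc hθP)

lemma outerRed_biUnion (hPdisj : ∀ ω ω', ω ≠ ω' → P ω ∩ P ω' = ∅) (S : Finset Ω)
    (e : Ω → Finset Θ) (hsub : ∀ ω, e ω ⊆ P ω)
    (hne : ∀ ω, (e ω).Nonempty) : outerRed P (S.biUnion e) = S := by
  ext ω'
  simp only [outerRed, Finset.mem_filter, Finset.mem_univ, true_and]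
  constructor
  · rintro ⟨θ, hθ⟩
    rw [Finset.mem_inter, Finset.mem_biUnion] at hθ
    obtain ⟨hθP, ω, hωS, hθe⟩ := hθ
    rwa [class_unique hPdisj hθP (hsub ω hθe)]
  · intro hω
    obtain ⟨θ, hθ⟩ := hne ω'
    exact ⟨θ, Finset.mem_inter.2 ⟨hsub ω' hθ, Finset.mem_biUnion.2 ⟨ω', hω, hθ⟩⟩⟩

lemma biUnion_inter_class_mem (hPdisj : ∀ ω ω', ω ≠ ω' → P ω ∩ P ω' = ∅) (S : Finset Ω)
    (e : Ω → Finset Θ) (hsub : ∀ ω, e ω ⊆ P ω)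
    {ω₀ : Ω} (h : ω₀ ∈ S) : (S.biUnion e) ∩ P ω₀ = e ω₀ := by
  ext θ
  rw [Finset.mem_inter, Finset.mem_biUnion]
  constructor
  · rintro ⟨⟨ω, hωS, hθe⟩, hθP⟩
    rwa [← class_unique hPdisj (hsub ω hθe) hθP]
  · intro hθ
    exact ⟨⟨ω₀, h, hθ⟩, hsub ω₀ hθ⟩

lemma biUnion_inter_class_notMem (hPdisj : ∀ ω ω', ω ≠ ω' → P ω ∩ P ω' = ∅) (S : Finset Ω)
    (e : Ω → Finset Θ) (hsub : ∀ ω, e ω ⊆ P ω)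
    {ω₀ : Ω} (h : ω₀ ∉ S) : (S.biUnion e) ∩ P ω₀ = ∅ := by
  rw [Finset.eq_empty_iff_forall_notMem]
  intro θ hθ
  rw [Finset.mem_inter, Finset.mem_biUnion] at hθ
  obtain ⟨⟨ω, hωS, hθe⟩, hθP⟩ := hθ
  rw [class_unique hPdisj (hsub ω hθe) hθP] at hωS
  exact h hωS

end Part

/-- Weight of a joint focal selection. -/
def wgt (m₀ : Finset Ω → ℝ) (mc : Ω → Finset Θ → ℝ) (q : Finset Ω × (Ω → Finset Θ)) : ℝ :=
  m₀ q.1 * ∏ ω, mc ω (q.2 ω)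

/-- Joint focal element of a joint focal selection. -/
def keyF (P : Ω → Finset Θ) (q : Finset Ω × (Ω → Finset Θ)) : Finset Θ :=
  (q.1.biUnion P) ∩ (Finset.univ.inf fun ω => q.2 ω ∪ (P ω)ᶜ)

/-- Explicit form of the combined mass function. -/
def mComb (P : Ω → Finset Θ) (m₀ : Finset Ω → ℝ) (mc : Ω → Finset Θ → ℝ) (E : Finset Θ) : ℝ :=
  ∑ q ∈ (Finset.univ : Finset (Finset Ω × (Ω → Finset Θ))).filter (fun q => keyF P q = E),
    wgt m₀ mc q

set_option maxHeartbeats 2000000 in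
/-- **Total belief theorem (existence).** Given a refining of `Ω` into `Θ` with
partition classes `P ω`, a prior BPA `m₀` on `Ω` (with positive plausibility on
each `ω`), and conditional BPAs `mc ω` on the `P ω`, the Dempster combination
`Bel = Bel₀^{↑Θ} ⊕ (⊕_ω →Bel_ω)` of the vacuous extension of the prior with the
combination of the conditional embeddings satisfies:
(P1) its marginal on `Ω` is `m₀`, and (P2) Dempster conditioning on each `P ω`
recovers `mc ω`. -/
theorem total_belief_existence [Nonempty Ω] (P : Ω → Finset Θ)
    (hPne : ∀ ω, (P ω).Nonempty)
    (hPdisj : ∀ ω ω', ω ≠ ω' → P ω ∩ P ω' = ∅)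
    (hPcov : ∀ θ : Θ, ∃ ω, θ ∈ P ω)
    (m₀ : Finset Ω → ℝ) (h₀e : m₀ ∅ = 0) (h₀nn : ∀ S, 0 ≤ m₀ S)
    (h₀1 : ∑ S : Finset Ω, m₀ S = 1)
    (hpl : ∀ ω : Ω,
      0 < ∑ S ∈ (Finset.univ : Finset (Finset Ω)).filter (fun S => ω ∈ S), m₀ S)
    (mc : Ω → Finset Θ → ℝ)
    (hce : ∀ ω, mc ω ∅ = 0) (hcnn : ∀ ω e, 0 ≤ mc ω e)
    (hcsupp : ∀ ω e, mc ω e ≠ 0 → e ⊆ P ω)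
    (hc1 : ∀ ω, ∑ e : Finset Θ, mc ω e = 1) :
    (∀ S : Finset Ω,
      (∑ E ∈ (Finset.univ : Finset (Finset Θ)).filter (fun E => outerRed P E = S),
        dempster (vacExt P m₀) (embComb P mc) E) = m₀ S) ∧
    (∀ ω : Ω, ∀ e : Finset Θ,
      dempster (dempster (vacExt P m₀) (embComb P mc)) (catMass (P ω)) e
        = mc ω e) := by
  -- basic facts about nonzero-weight selections
  have hgood : ∀ q : Finset Ω × (Ω → Finset Θ), wgt m₀ mc q ≠ 0 →
      q.1.Nonempty ∧ (∀ ω, q.2 ω ⊆ P ω) ∧ (∀ ω, (q.2 ω).Nonempty) := by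
    intro q hq
    have hm : m₀ q.1 ≠ 0 := by intro h; exact hq (by simp [wgt, h])
    have hp : ∀ ω, mc ω (q.2 ω) ≠ 0 := by
      intro ω h
      have hz : (∏ ω, mc ω (q.2 ω)) = 0 :=
        Finset.prod_eq_zero (Finset.mem_univ ω) h
      exact hq (by simp [wgt, hz])
    refine ⟨?_, fun ω => hcsupp ω _ (hp ω), fun ω => ?_⟩
    · rcases Finset.eq_empty_or_nonempty q.1 with h | h
      · rw [h] at hm; exact absurd h₀e hm
      · exact h
    · rw [Finset.nonempty_iff_ne_empty]
      intro h
      exact hp ω (by rw [h]; exact hce ω)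
  have hkeyg : ∀ q, wgt m₀ mc q ≠ 0 → keyF P q = q.1.biUnion q.2 := fun q hq =>
    key_eq hPdisj q.1 q.2 (hgood q hq).2.1
  -- swapping filter conditions that agree on nonzero weights
  have hswap : ∀ (c₁ c₂ : Finset Ω × (Ω → Finset Θ) → Prop)
      (_ : DecidablePred c₁) (_ : DecidablePred c₂),
      (∀ q, wgt m₀ mc q ≠ 0 → (c₁ q ↔ c₂ q)) →
      ∑ q ∈ univ.filter c₁, wgt m₀ mc q = ∑ q ∈ univ.filter c₂, wgt m₀ mc q := by
    intro c₁ c₂ _ _ hiff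
    rw [Finset.sum_filter, Finset.sum_filter]
    refine Finset.sum_congr rfl fun q _ => ?_
    by_cases hw : wgt m₀ mc q = 0
    · simp only [hw, ite_self]
    · exact if_congr (hiff q hw) rfl rfl
  -- no conflict
  have hconf : mComb P m₀ mc ∅ = 0 := by
    refine Finset.sum_eq_zero fun q hq => ?_
    by_contra hw
    rw [Finset.mem_filter] at hq
    obtain ⟨⟨ω, hω⟩, hsub, hne⟩ := hgood q hw
    have hkey := hkeyg q hw
    rw [hq.2] at hkey
    obtain ⟨θ, hθ⟩ := hne ω
    have : θ ∈ q.1.biUnion q.2 := Finset.mem_biUnion.2 ⟨ω, hω, hθ⟩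
    rw [← hkey] at this
    exact Finset.notMem_empty θ this
  -- the numerator of the first Dempster combination
  have hAq : ∀ E : Finset Θ,
      (∑ p ∈ (univ : Finset (Finset Θ × Finset Θ)).filter (fun p => p.1 ∩ p.2 = E),
        vacExt P m₀ p.1 * embComb P mc p.2) = mComb P m₀ mc E := by
    intro E
    have h := comb_sum_aux (fun S : Finset Ω => S.biUnion P)
      (fun e : Ω → Finset Θ => Finset.univ.inf fun ω => e ω ∪ (P ω)ᶜ) m₀
      (fun e => ∏ ω, mc ω (e ω)) (fun p => p.1 ∩ p.2 = E)
    unfold vacExt embComb mComb keyF wgt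
    convert h using 2
  have hDem : dempster (vacExt P m₀) (embComb P mc) = mComb P m₀ mc := by
    funext E
    by_cases hE : E = ∅
    · subst hE
      rw [hconf]
      simp [dempster]
    · rw [show dempster (vacExt P m₀) (embComb P mc) E
          = (∑ p ∈ (univ : Finset (Finset Θ × Finset Θ)).filter
              (fun p => p.1 ∩ p.2 = E), vacExt P m₀ p.1 * embComb P mc p.2) /
            (1 - ∑ p ∈ (univ : Finset (Finset Θ × Finset Θ)).filter
              (fun p => p.1 ∩ p.2 = (∅ : Finset Θ)),
              vacExt P m₀ p.1 * embComb P mc p.2) from if_neg hE,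
        hAq E, hAq ∅, hconf]
      simp
  -- total-one property of the selection sum
  have hsel1 : ∀ S' : Finset Ω, (∑ e : Ω → Finset Θ, ∏ ω, mc ω (e ω)) = 1 := by
    intro _
    rw [sum_prod_fun]
    simp [hc1]
  constructor
  · -- (P1) marginal
    intro S
    rw [hDem]
    have h1 : (∑ E ∈ (univ : Finset (Finset Θ)).filter (fun E => outerRed P E = S),
        mComb P m₀ mc E)
        = ∑ q ∈ univ.filter
            (fun q => keyF P q ∈ (univ : Finset (Finset Θ)).filter
              (fun E => outerRed P E = S)), wgt m₀ mc q :=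
      Finset.sum_fiberwise_eq_sum_filter _ _ _ _
    rw [h1]
    have h2 := hswap
      (fun q => keyF P q ∈ (univ : Finset (Finset Θ)).filter (fun E => outerRed P E = S))
      (fun q => q.1 = S) inferInstance inferInstance ?_
    · rw [h2]
      -- factor the remaining sum
      rw [Finset.sum_filter, Fintype.sum_prod_type]
      have h3 : ∀ S' : Finset Ω,
          (∑ e : Ω → Finset Θ, if S' = S then wgt m₀ mc (S', e) else 0)
          = if S' = S then m₀ S' else 0 := by
        intro S'
        by_cases h : S' = S
        · subst h
          have hpt : ∀ e : Ω → Finset Θ,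
              (if S' = S' then wgt m₀ mc (S', e) else 0) = wgt m₀ mc (S', e) :=
            fun e => if_pos rfl
          rw [Finset.sum_congr rfl fun e _ => hpt e, if_pos rfl]
          simp only [wgt]
          rw [← Finset.mul_sum, hsel1 S', mul_one]
        · simp [h]
      rw [Finset.sum_congr rfl fun S' _ => h3 S']
      rw [Finset.sum_ite_eq' univ S]
      simp
    · intro q hw
      simp only [Finset.mem_filter, Finset.mem_univ, true_and]
      rw [hkeyg q hw]
      obtain ⟨hq1, hsub, hne⟩ := hgood q hw
      rw [outerRed_biUnion hPdisj q.1 q.2 hsub hne]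
  · -- (P2) conditioning
    intro ω₀ e
    rw [hDem]
    -- collapse the catMass sums
    have hcat : ∀ c : Finset Θ,
        (∑ p ∈ (univ : Finset (Finset Θ × Finset Θ)).filter (fun p => p.1 ∩ p.2 = c),
          mComb P m₀ mc p.1 * catMass (P ω₀) p.2)
        = ∑ E ∈ (univ : Finset (Finset Θ)).filter (fun E => E ∩ P ω₀ = c),
            mComb P m₀ mc E := by
      intro c
      rw [Finset.sum_filter, Fintype.sum_prod_type, Finset.sum_filter]
      refine Finset.sum_congr rfl fun E _ => ?_
      have hpt : ∀ B : Finset Θ,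
          (if E ∩ B = c then mComb P m₀ mc E * catMass (P ω₀) B else 0)
          = if B = P ω₀ then (if E ∩ P ω₀ = c then mComb P m₀ mc E else 0) else 0 := by
        intro B
        by_cases hB : B = P ω₀
        · subst hB; simp [catMass]
        · simp [catMass, hB]
      rw [Finset.sum_congr rfl fun B _ => hpt B, Finset.sum_ite_eq' univ (P ω₀)]
      simp
    -- plausibility of ω₀
    set Pl : ℝ := ∑ S ∈ (univ : Finset (Finset Ω)).filter (fun S => ω₀ ∈ S), m₀ S with hPl
    have hPlpos := hpl ω₀
    -- fiberwise reduction for an intersection condition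
    have hfib : ∀ (c : Finset Θ),
        (∑ E ∈ (univ : Finset (Finset Θ)).filter (fun E => E ∩ P ω₀ = c),
          mComb P m₀ mc E)
        = ∑ q ∈ univ.filter
            (fun q => keyF P q ∈ (univ : Finset (Finset Θ)).filter
              (fun E => E ∩ P ω₀ = c)), wgt m₀ mc q := fun c =>
      Finset.sum_fiberwise_eq_sum_filter _ _ _ _
    -- the conflict with Bel_{P ω₀}
    have hden : (∑ E ∈ (univ : Finset (Finset Θ)).filter
          (fun E => E ∩ P ω₀ = (∅ : Finset Θ)), mComb P m₀ mc E) = 1 - Pl := by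
      rw [hfib ∅]
      have h2 := hswap
        (fun q => keyF P q ∈ (univ : Finset (Finset Θ)).filter
          (fun E => E ∩ P ω₀ = (∅ : Finset Θ)))
        (fun q => ω₀ ∉ q.1) inferInstance inferInstance ?_
      · rw [h2]
        rw [Finset.sum_filter, Fintype.sum_prod_type]
        have h3 : ∀ S' : Finset Ω,
            (∑ e' : Ω → Finset Θ, if ω₀ ∉ S' then wgt m₀ mc (S', e') else 0)
            = if ω₀ ∉ S' then m₀ S' else 0 := by
          intro S'
          by_cases h : ω₀ ∉ S'
          · have hpt : ∀ e' : Ω → Finset Θ,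
                (if ω₀ ∉ S' then wgt m₀ mc (S', e') else 0) = wgt m₀ mc (S', e') :=
              fun e' => if_pos h
            rw [Finset.sum_congr rfl fun e' _ => hpt e', if_pos h]
            simp only [wgt]
            rw [← Finset.mul_sum, hsel1 S', mul_one]
          · simp [h]
        rw [Finset.sum_congr rfl fun S' _ => h3 S']
        rw [← Finset.sum_filter]
        have := Finset.sum_filter_add_sum_filter_not (univ : Finset (Finset Ω))
          (fun S => ω₀ ∈ S) m₀
        rw [h₀1] at this
        have hfilter : (univ : Finset (Finset Ω)).filter (fun S => ¬ ω₀ ∈ S)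
            = (univ : Finset (Finset Ω)).filter (fun S => ω₀ ∉ S) := rfl
        linarith [this]
      · intro q hw
        simp only [Finset.mem_filter, Finset.mem_univ, true_and]
        rw [hkeyg q hw]
        obtain ⟨hq1, hsub, hne⟩ := hgood q hw
        constructor
        · intro h hmem
          rw [biUnion_inter_class_mem hPdisj q.1 q.2 hsub hmem] at h
          obtain ⟨θ, hθ⟩ := hne ω₀
          rw [h] at hθ
          exact Finset.notMem_empty θ hθ
        · intro h
          exact biUnion_inter_class_notMem hPdisj q.1 q.2 hsub h
    by_cases he : e = ∅
    · subst he
      rw [hce ω₀]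
      simp [dempster]
    · rw [show dempster (mComb P m₀ mc) (catMass (P ω₀)) e
          = (∑ p ∈ (univ : Finset (Finset Θ × Finset Θ)).filter
              (fun p => p.1 ∩ p.2 = e), mComb P m₀ mc p.1 * catMass (P ω₀) p.2) /
            (1 - ∑ p ∈ (univ : Finset (Finset Θ × Finset Θ)).filter
              (fun p => p.1 ∩ p.2 = (∅ : Finset Θ)),
              mComb P m₀ mc p.1 * catMass (P ω₀) p.2) from if_neg he,
        hcat e, hcat ∅, hden]
      -- numerator
      have hnum : (∑ E ∈ (univ : Finset (Finset Θ)).filter (fun E => E ∩ P ω₀ = e),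
          mComb P m₀ mc E) = Pl * mc ω₀ e := by
        rw [hfib e]
        have h2 := hswap
          (fun q => keyF P q ∈ (univ : Finset (Finset Θ)).filter
            (fun E => E ∩ P ω₀ = e))
          (fun q => ω₀ ∈ q.1 ∧ q.2 ω₀ = e) inferInstance inferInstance ?_
        · rw [h2]
          rw [Finset.sum_filter, Fintype.sum_prod_type]
          -- the inner sum over selections
          have hsel : ∀ S' : Finset Ω,
              (∑ e' : Ω → Finset Θ, if e' ω₀ = e then ∏ ω, mc ω (e' ω) else 0)
              = mc ω₀ e := by
            intro S'
            have h1 : ∀ e' : Ω → Finset Θ,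
                (if e' ω₀ = e then ∏ ω, mc ω (e' ω) else 0)
                = ∏ ω, (if ω = ω₀ then (if e' ω = e then mc ω (e' ω) else 0)
                    else mc ω (e' ω)) := by
              intro e'
              by_cases h : e' ω₀ = e
              · rw [if_pos h]
                refine Finset.prod_congr rfl fun ω _ => ?_
                by_cases hω : ω = ω₀
                · subst hω; simp [h]
                · simp [hω]
              · rw [if_neg h]
                symm
                apply Finset.prod_eq_zero (Finset.mem_univ ω₀)
                simp [h]
            rw [Finset.sum_congr rfl fun e' _ => h1 e',
              sum_prod_fun (fun ω x =>
                if ω = ω₀ then (if x = e then mc ω x else 0) else mc ω x)]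
            have h2 : ∀ ω : Ω,
                (∑ x : Finset Θ, if ω = ω₀ then (if x = e then mc ω x else 0) else mc ω x)
                = if ω = ω₀ then mc ω₀ e else 1 := by
              intro ω
              by_cases hω : ω = ω₀
              · have hpt : ∀ x : Finset Θ,
                    (if ω = ω₀ then (if x = e then mc ω x else 0) else mc ω x)
                    = if x = e then mc ω x else 0 := fun x => if_pos hω
                rw [Finset.sum_congr rfl fun x _ => hpt x, if_pos hω,
                  Finset.sum_ite_eq' univ e]
                simp [hω]
              · simp [hω, hc1]
            rw [Finset.prod_congr rfl fun ω _ => h2 ω]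
            rw [Finset.prod_eq_single ω₀ (fun ω _ hω => by simp [hω]) (by simp)]
            simp
          have h3 : ∀ S' : Finset Ω,
              (∑ e' : Ω → Finset Θ,
                if ω₀ ∈ S' ∧ e' ω₀ = e then wgt m₀ mc (S', e') else 0)
              = (if ω₀ ∈ S' then m₀ S' else 0) * mc ω₀ e := by
            intro S'
            by_cases h : ω₀ ∈ S'
            · have hpt : ∀ e' : Ω → Finset Θ,
                  (if ω₀ ∈ S' ∧ e' ω₀ = e then wgt m₀ mc (S', e') else 0)
                  = if e' ω₀ = e then wgt m₀ mc (S', e') else 0 :=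
                fun e' => if_congr (by simp [h]) rfl rfl
              rw [Finset.sum_congr rfl fun e' _ => hpt e', if_pos h]
              simp only [wgt]
              calc (∑ e' : Ω → Finset Θ, if e' ω₀ = e then m₀ S' * ∏ ω, mc ω (e' ω) else 0)
                  = m₀ S' * ∑ e' : Ω → Finset Θ,
                      (if e' ω₀ = e then ∏ ω, mc ω (e' ω) else 0) := by
                    rw [Finset.mul_sum]
                    refine Finset.sum_congr rfl fun e' _ => ?_
                    by_cases hh : e' ω₀ = e <;> simp [hh]
                _ = m₀ S' * mc ω₀ e := by rw [hsel S']
            · simp [h]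
          rw [Finset.sum_congr rfl fun S' _ => h3 S']
          rw [← Finset.sum_mul, ← Finset.sum_filter]
        · intro q hw
          simp only [Finset.mem_filter, Finset.mem_univ, true_and]
          rw [hkeyg q hw]
          obtain ⟨hq1, hsub, hne⟩ := hgood q hw
          constructor
          · intro h
            by_cases hmem : ω₀ ∈ q.1
            · rw [biUnion_inter_class_mem hPdisj q.1 q.2 hsub hmem] at h
              exact ⟨hmem, h⟩
            · rw [biUnion_inter_class_notMem hPdisj q.1 q.2 hsub hmem] at h
              exact absurd h.symm he
          · rintro ⟨hmem, hq2⟩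
            rw [biUnion_inter_class_mem hPdisj q.1 q.2 hsub hmem]
            exact hq2
      rw [hnum]
      have hPl0 : Pl ≠ 0 := by
        have hh := hpl ω₀
        rw [hPl]
        exact ne_of_gt hh
      have h4 : (1 : ℝ) - (1 - Pl) = Pl := by ring
      rw [h4, mul_comm, mul_div_assoc, div_self hPl0, mul_one]
end

section
/- If the prior Bel₀ on the coarsening Ω is Bayesian (a probability measure), then the total belief function Bel on Θ satisfying (P1) Bel marginalizes to Bel₀ on Ω and (P2) Bel ⊕ Bel_{Πᵢ} = Belᵢ for all i is unique, with mass m(e) = mᵢ(e)·m₀(ωᵢ) when e is a focal element of Belᵢ in Πᵢ, and m(e) = 0 otherwise. -/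
set_option linter.unusedSectionVars false

open Finset

variable {Ω Θ : Type} [Fintype Ω] [DecidableEq Ω] [Fintype Θ] [DecidableEq Θ]

/-- `m` is a total mass function for the prior `m₀` on `Ω` and the conditionals
`mc ω` on the partition classes `P ω`: (P1) its marginal on `Ω` (via the outer
reduction) is `m₀`, and (P2) Dempster conditioning on each `P ω` yields `mc ω`. -/
def IsTotalMass (P : Ω → Finset Θ) (m₀ : Finset Ω → ℝ) (mc : Ω → Finset Θ → ℝ)
    (m : Finset Θ → ℝ) : Prop :=
  (∀ S : Finset Ω,
    (∑ E ∈ (Finset.univ : Finset (Finset Θ)).filter (fun E => outerRed P E = S),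
      m E) = m₀ S) ∧
  (∀ ω : Ω, ∀ e : Finset Θ, dempster m (catMass (P ω)) e = mc ω e)

lemma tb_mem_outer (P : Ω → Finset Θ) (E : Finset Θ) (ω : Ω) :
    ω ∈ outerRed P E ↔ (P ω ∩ E).Nonempty := by simp [outerRed]

lemma tb_outer_empty (P : Ω → Finset Θ) : outerRed P (∅ : Finset Θ) = ∅ := by
  simp [outerRed]

lemma tb_outer_singleton (P : Ω → Finset Θ)
    (hPdisj : ∀ ω ω', ω ≠ ω' → P ω ∩ P ω' = ∅)
    {E : Finset Θ} {ω : Ω} (hE : E.Nonempty) (hsub : E ⊆ P ω) :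
    outerRed P E = {ω} := by
  ext ω'
  simp only [tb_mem_outer, Finset.mem_singleton]
  constructor
  · rintro ⟨θ, hθ⟩
    rw [Finset.mem_inter] at hθ
    by_contra hne
    have hmem : θ ∈ P ω' ∩ P ω := Finset.mem_inter.2 ⟨hθ.1, hsub hθ.2⟩
    simp [hPdisj ω' ω hne] at hmem
  · rintro rfl
    obtain ⟨θ, hθ⟩ := hE
    exact ⟨θ, Finset.mem_inter.2 ⟨hsub hθ, hθ⟩⟩

lemma tb_subset_of_outer_singleton (P : Ω → Finset Θ)
    (hPcov : ∀ θ : Θ, ∃ ω, θ ∈ P ω) {E : Finset Θ} {ω : Ω}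
    (h : outerRed P E = {ω}) : E ⊆ P ω := by
  intro θ hθ
  obtain ⟨ω', hω'⟩ := hPcov θ
  have hm : ω' ∈ outerRed P E :=
    (tb_mem_outer P E ω').2 ⟨θ, Finset.mem_inter.2 ⟨hω', hθ⟩⟩
  rw [h, Finset.mem_singleton] at hm
  subst hm; exact hω'

lemma tb_fiber (P : Ω → Finset Θ) (m : Finset Θ → ℝ) (p : Finset Ω → Prop)
    [DecidablePred p] :
    ∑ A ∈ Finset.univ.filter (fun A : Finset Θ => p (outerRed P A)), m A
      = ∑ S ∈ Finset.univ.filter p,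
          ∑ A ∈ Finset.univ.filter (fun A : Finset Θ => outerRed P A = S), m A := by
  rw [← Finset.sum_fiberwise_of_maps_to (g := outerRed P)
      (t := Finset.univ.filter p) (fun A hA => by
        simp only [Finset.mem_filter, Finset.mem_univ, true_and] at hA ⊢
        exact hA)]
  refine Finset.sum_congr rfl fun S hS => ?_
  refine Finset.sum_congr ?_ fun _ _ => rfl
  ext A
  simp only [Finset.mem_filter, Finset.mem_univ, true_and]
  constructor
  · rintro ⟨_, h⟩; exact h
  · intro h
    exact ⟨by rw [h]; exact (Finset.mem_filter.1 hS).2, h⟩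

lemma tb_m0_zero (m₀ : Finset Ω → ℝ)
    (hbayes : ∀ S : Finset Ω, m₀ S ≠ 0 → ∃ ω, S = {ω})
    {S : Finset Ω} (h : ¬ ∃ ω, S = {ω}) : m₀ S = 0 := by
  by_contra h'; exact h (hbayes S h')

lemma tb_total (P : Ω → Finset Θ) (m : Finset Θ → ℝ) (m₀ : Finset Ω → ℝ)
    (hm1 : ∀ S : Finset Ω,
      (∑ E ∈ (Finset.univ : Finset (Finset Θ)).filter
        (fun E => outerRed P E = S), m E) = m₀ S)
    (h₀1 : ∑ S : Finset Ω, m₀ S = 1) :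
    ∑ A : Finset Θ, m A = 1 := by
  rw [← Finset.sum_fiberwise_of_maps_to (g := outerRed P)
      (t := (Finset.univ : Finset (Finset Ω))) (fun A _ => Finset.mem_univ _)]
  rw [← h₀1]
  exact Finset.sum_congr rfl fun S _ => hm1 S

lemma tb_denom (P : Ω → Finset Θ) (m : Finset Θ → ℝ) (m₀ : Finset Ω → ℝ)
    (hbayes : ∀ S : Finset Ω, m₀ S ≠ 0 → ∃ ω, S = {ω})
    (h₀1 : ∑ S : Finset Ω, m₀ S = 1)
    (hm1 : ∀ S : Finset Ω,
      (∑ E ∈ (Finset.univ : Finset (Finset Θ)).filter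
        (fun E => outerRed P E = S), m E) = m₀ S)
    (ω : Ω) :
    ∑ A ∈ Finset.univ.filter (fun A : Finset Θ => A ∩ P ω = ∅), m A
      = 1 - m₀ {ω} := by
  have hcompl : ∑ A ∈ Finset.univ.filter (fun A : Finset Θ => ¬ A ∩ P ω = ∅), m A
      = m₀ {ω} := by
    have hpred : (Finset.univ.filter (fun A : Finset Θ => ¬ A ∩ P ω = ∅))
        = Finset.univ.filter (fun A : Finset Θ => ω ∈ outerRed P A) := by
      apply Finset.filter_congr
      intro A _
      rw [tb_mem_outer, Finset.inter_comm]
      exact Finset.nonempty_iff_ne_empty.symm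
    rw [hpred, tb_fiber P m (fun S => ω ∈ S)]
    rw [Finset.sum_congr rfl (fun S _ => hm1 S)]
    rw [Finset.sum_eq_single_of_mem ({ω} : Finset Ω)
      (by simp) (fun S hSmem hS => ?_)]
    apply tb_m0_zero m₀ hbayes
    rintro ⟨ω', rfl⟩
    simp only [Finset.mem_filter, Finset.mem_univ, true_and,
      Finset.mem_singleton] at hSmem
    subst hSmem
    exact hS rfl
  have hsplit := Finset.sum_filter_add_sum_filter_not
    (Finset.univ : Finset (Finset Θ)) (fun A : Finset Θ => A ∩ P ω = ∅) m
  rw [tb_total P m m₀ hm1 h₀1] at hsplit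
  linarith [hsplit, hcompl]

lemma tb_dempster_cat (m : Finset Θ → ℝ) (B e : Finset Θ) :
    (∑ p ∈ (Finset.univ : Finset (Finset Θ × Finset Θ)).filter
        (fun p => p.1 ∩ p.2 = e), m p.1 * catMass B p.2)
      = ∑ A ∈ Finset.univ.filter (fun A : Finset Θ => A ∩ B = e), m A := by
  rw [Finset.sum_filter, Finset.sum_filter, Fintype.sum_prod_type]
  refine Finset.sum_congr rfl fun A _ => ?_
  rw [Finset.sum_eq_single B]
  · simp [catMass]
  · intro C _ hC
    simp [catMass, hC]
  · simp

lemma tb_fiber_not_class (P : Ω → Finset Θ)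
    (hPdisj : ∀ ω ω', ω ≠ ω' → P ω ∩ P ω' = ∅)
    {A e : Finset Θ} {ω : Ω}
    (hA : A ∩ P ω = e) (he : e.Nonempty) (hAe : A ≠ e) :
    ∀ ω', ¬ A ⊆ P ω' := by
  intro ω' hsub
  have hesub : e ⊆ P ω := hA ▸ Finset.inter_subset_right
  have heA : e ⊆ A := hA ▸ Finset.inter_subset_left
  by_cases hωω : ω' = ω
  · subst hωω
    exact hAe (by rw [← hA, Finset.inter_eq_left.2 hsub])
  · obtain ⟨θ, hθ⟩ := he
    have hmem : θ ∈ P ω ∩ P ω' := Finset.mem_inter.2 ⟨hesub hθ, hsub (heA hθ)⟩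
    simp [hPdisj ω ω' (fun h => hωω h.symm)] at hmem

lemma tb_num (P : Ω → Finset Θ)
    (hPdisj : ∀ ω ω', ω ≠ ω' → P ω ∩ P ω' = ∅)
    {m : Finset Θ → ℝ} {ω : Ω} {e : Finset Θ}
    (he : e.Nonempty) (hsub : e ⊆ P ω)
    (hz : ∀ A : Finset Θ, A.Nonempty → (∀ ω', ¬ A ⊆ P ω') → m A = 0) :
    ∑ A ∈ Finset.univ.filter (fun A : Finset Θ => A ∩ P ω = e), m A = m e := by
  rw [Finset.sum_eq_single_of_mem e
    (by simp [Finset.inter_eq_left.2 hsub])]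
  intro A hA hAe
  rw [Finset.mem_filter] at hA
  have heA : e ⊆ A := hA.2 ▸ Finset.inter_subset_left
  exact hz A (he.mono heA) (tb_fiber_not_class P hPdisj hA.2 he hAe)

lemma tb_dempster_eval (P : Ω → Finset Θ) (m : Finset Θ → ℝ) (m₀ : Finset Ω → ℝ)
    (hbayes : ∀ S : Finset Ω, m₀ S ≠ 0 → ∃ ω, S = {ω})
    (h₀1 : ∑ S : Finset Ω, m₀ S = 1)
    (hm1 : ∀ S : Finset Ω,
      (∑ E ∈ (Finset.univ : Finset (Finset Θ)).filter
        (fun E => outerRed P E = S), m E) = m₀ S)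
    (ω : Ω) {e : Finset Θ} (he : e ≠ ∅) :
    dempster m (catMass (P ω)) e
      = (∑ A ∈ Finset.univ.filter (fun A : Finset Θ => A ∩ P ω = e), m A)
          / m₀ {ω} := by
  unfold dempster
  rw [if_neg he, tb_dempster_cat, tb_dempster_cat,
    tb_denom P m m₀ hbayes h₀1 hm1 ω]
  congr 1
  ring

lemma tb_mstar_eq (P : Ω → Finset Θ)
    (hPdisj : ∀ ω ω', ω ≠ ω' → P ω ∩ P ω' = ∅)
    (m₀ : Finset Ω → ℝ) (mc : Ω → Finset Θ → ℝ) {e : Finset Θ} {ω : Ω}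
    (he : e.Nonempty) (hsub : e ⊆ P ω) :
    (∑ ω' : Ω, if e ⊆ P ω' then mc ω' e * m₀ {ω'} else 0)
      = mc ω e * m₀ {ω} := by
  rw [Finset.sum_eq_single ω]
  · rw [if_pos hsub]
  · intro ω' _ hne
    rw [if_neg]
    intro hsub'
    obtain ⟨θ, hθ⟩ := he
    have hmem : θ ∈ P ω ∩ P ω' := Finset.mem_inter.2 ⟨hsub hθ, hsub' hθ⟩
    simp [hPdisj ω ω' (fun h => hne h.symm)] at hmem
  · simp

lemma tb_m_zero (P : Ω → Finset Θ) (hPcov : ∀ θ : Θ, ∃ ω, θ ∈ P ω)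
    (m : Finset Θ → ℝ) (m₀ : Finset Ω → ℝ)
    (hbayes : ∀ S : Finset Ω, m₀ S ≠ 0 → ∃ ω, S = {ω})
    (hnn : ∀ E, 0 ≤ m E)
    (hm1 : ∀ S : Finset Ω,
      (∑ E ∈ (Finset.univ : Finset (Finset Θ)).filter
        (fun E => outerRed P E = S), m E) = m₀ S)
    {A : Finset Θ} (hA : A.Nonempty) (h : ∀ ω, ¬ A ⊆ P ω) : m A = 0 := by
  have h0 : m₀ (outerRed P A) = 0 := by
    apply tb_m0_zero m₀ hbayes
    rintro ⟨ω, hω⟩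
    exact h ω (tb_subset_of_outer_singleton P hPcov hω)
  exact (Finset.sum_eq_zero_iff_of_nonneg (fun E _ => hnn E)).1
    ((hm1 _).trans h0) A (by simp)

/-- **Total belief theorem, Bayesian prior case (uniqueness).** If the prior `Bel₀`
on the coarsening `Ω` is Bayesian (all focal elements are singletons, with positive
mass), then there is a unique total belief function on `Θ` satisfying (P1) and (P2),
whose mass is `m(e) = mc ω e · m₀ {ω}` when `e` is a focal element of `Bel_ω` inside
`P ω`, and `0` otherwise. -/
theorem total_belief_bayesian_unique [Nonempty Ω] (P : Ω → Finset Θ)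
    (hPne : ∀ ω, (P ω).Nonempty)
    (hPdisj : ∀ ω ω', ω ≠ ω' → P ω ∩ P ω' = ∅)
    (hPcov : ∀ θ : Θ, ∃ ω, θ ∈ P ω)
    (m₀ : Finset Ω → ℝ) (h₀e : m₀ ∅ = 0) (h₀nn : ∀ S, 0 ≤ m₀ S)
    (h₀1 : ∑ S : Finset Ω, m₀ S = 1)
    (hbayes : ∀ S : Finset Ω, m₀ S ≠ 0 → ∃ ω, S = {ω})
    (hpos : ∀ ω : Ω, 0 < m₀ {ω})
    (mc : Ω → Finset Θ → ℝ)
    (hce : ∀ ω, mc ω ∅ = 0) (hcnn : ∀ ω e, 0 ≤ mc ω e)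
    (hcsupp : ∀ ω e, mc ω e ≠ 0 → e ⊆ P ω)
    (hc1 : ∀ ω, ∑ e : Finset Θ, mc ω e = 1) :
    IsTotalMass P m₀ mc
      (fun E => if E = ∅ then 0
        else ∑ ω : Ω, if E ⊆ P ω then mc ω E * m₀ {ω} else 0) ∧
    ∀ m : Finset Θ → ℝ, m ∅ = 0 → (∀ E, 0 ≤ m E) → (∑ E : Finset Θ, m E = 1) →
      IsTotalMass P m₀ mc m →
      m = fun E => if E = ∅ then 0
        else ∑ ω : Ω, if E ⊆ P ω then mc ω E * m₀ {ω} else 0 := by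
  set M : Finset Θ → ℝ := fun E => if E = ∅ then 0
    else ∑ ω : Ω, if E ⊆ P ω then mc ω E * m₀ {ω} else 0 with hMdef
  -- M vanishes on sets not contained in a single class
  have hMz : ∀ A : Finset Θ, A.Nonempty → (∀ ω', ¬ A ⊆ P ω') → M A = 0 := by
    intro A hA h
    rw [hMdef]
    simp only
    rw [if_neg (Finset.nonempty_iff_ne_empty.1 hA)]
    exact Finset.sum_eq_zero fun ω _ => if_neg (h ω)
  -- M on a class element
  have hMeq : ∀ {e : Finset Θ} {ω : Ω}, e.Nonempty → e ⊆ P ω →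
      M e = mc ω e * m₀ {ω} := by
    intro e ω he hsub
    rw [hMdef]
    simp only
    rw [if_neg (Finset.nonempty_iff_ne_empty.1 he)]
    exact tb_mstar_eq P hPdisj m₀ mc he hsub
  -- (P1) for M
  have hM1 : ∀ S : Finset Ω,
      (∑ E ∈ (Finset.univ : Finset (Finset Θ)).filter
        (fun E => outerRed P E = S), M E) = m₀ S := by
    intro S
    by_cases hS1 : ∃ ω, S = {ω}
    · obtain ⟨ω, rfl⟩ := hS1
      have hfil : (Finset.univ : Finset (Finset Θ)).filter
            (fun E => outerRed P E = {ω})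
          = Finset.univ.filter (fun E : Finset Θ => E ≠ ∅ ∧ E ⊆ P ω) := by
        ext E
        simp only [Finset.mem_filter, Finset.mem_univ, true_and]
        constructor
        · intro h
          have hE : E ≠ ∅ := by
            rintro rfl
            rw [tb_outer_empty] at h
            exact (Finset.singleton_ne_empty ω) h.symm
          exact ⟨hE, tb_subset_of_outer_singleton P hPcov h⟩
        · rintro ⟨h1, h2⟩
          exact tb_outer_singleton P hPdisj (Finset.nonempty_iff_ne_empty.2 h1) h2
      rw [hfil]
      have hcong : ∑ E ∈ Finset.univ.filter
            (fun E : Finset Θ => E ≠ ∅ ∧ E ⊆ P ω), M E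
          = ∑ E ∈ Finset.univ.filter
            (fun E : Finset Θ => E ≠ ∅ ∧ E ⊆ P ω), mc ω E * m₀ {ω} := by
        refine Finset.sum_congr rfl fun E hE => ?_
        rw [Finset.mem_filter] at hE
        exact hMeq (Finset.nonempty_iff_ne_empty.2 hE.2.1) hE.2.2
      rw [hcong, ← Finset.sum_mul]
      have hmc : ∑ E ∈ Finset.univ.filter
            (fun E : Finset Θ => E ≠ ∅ ∧ E ⊆ P ω), mc ω E
          = ∑ E : Finset Θ, mc ω E := by
        apply Finset.sum_subset (Finset.filter_subset _ _)
        intro E _ hE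
        simp only [Finset.mem_filter, Finset.mem_univ, true_and, not_and,
          not_not] at hE
        by_cases h0 : E = ∅
        · rw [h0]; exact hce ω
        · by_contra hne
          exact (hE h0) (hcsupp ω E hne)
      rw [hmc, hc1 ω, one_mul]
    · rw [tb_m0_zero m₀ hbayes hS1]
      apply Finset.sum_eq_zero
      intro E hE
      rw [Finset.mem_filter] at hE
      by_cases h0 : E = ∅
      · rw [h0, hMdef]; simp
      · apply hMz E (Finset.nonempty_iff_ne_empty.2 h0)
        intro ω hsub
        exact hS1 ⟨ω, hE.2 ▸ tb_outer_singleton P hPdisj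
          (Finset.nonempty_iff_ne_empty.2 h0) hsub⟩
  constructor
  · refine ⟨hM1, fun ω e => ?_⟩
    by_cases h0 : e = ∅
    · rw [h0]
      unfold dempster
      rw [if_pos rfl, (hce ω).symm]
    · rw [tb_dempster_eval P M m₀ hbayes h₀1 hM1 ω h0]
      by_cases hsub : e ⊆ P ω
      · rw [tb_num P hPdisj (Finset.nonempty_iff_ne_empty.2 h0) hsub hMz,
          hMeq (Finset.nonempty_iff_ne_empty.2 h0) hsub,
          mul_div_cancel_right₀ _ (ne_of_gt (hpos ω))]
      · have hzero : ∑ A ∈ Finset.univ.filter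
            (fun A : Finset Θ => A ∩ P ω = e), M A = 0 := by
          apply Finset.sum_eq_zero
          intro A hA
          rw [Finset.mem_filter] at hA
          exact absurd (hA.2 ▸ Finset.inter_subset_right) hsub
        rw [hzero, zero_div]
        by_contra hne
        exact hsub (hcsupp ω e fun h => hne h.symm)
  · rintro m hm0 hmnn hmsum ⟨hm1, hm2⟩
    have hz : ∀ A : Finset Θ, A.Nonempty → (∀ ω', ¬ A ⊆ P ω') → m A = 0 :=
      fun A hA h => tb_m_zero P hPcov m m₀ hbayes hmnn hm1 hA h
    funext E
    by_cases hE : E = ∅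
    · rw [hE, hm0, hMdef]; simp
    · show m E = M E
      by_cases hsub : ∃ ω, E ⊆ P ω
      · obtain ⟨ω, hω⟩ := hsub
        have heq := hm2 ω E
        rw [tb_dempster_eval P m m₀ hbayes h₀1 hm1 ω hE,
          tb_num P hPdisj (Finset.nonempty_iff_ne_empty.2 hE) hω hz,
          div_eq_iff (ne_of_gt (hpos ω))] at heq
        rw [heq, hMeq (Finset.nonempty_iff_ne_empty.2 hE) hω]
      · push_neg at hsub
        rw [hz E (Finset.nonempty_iff_ne_empty.2 hE) hsub,
          hMz E (Finset.nonempty_iff_ne_empty.2 hE) hsub]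
end
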